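/- arXiv:0808.2943 — 9 statements merged into one kernel-verified Lean document; each statement's English description precedes it below -/
import Mathlib

section
/- For all integers m ≥ 1 and l with 0 ≤ l ≤ m, the quantity A_{l,m} := (l! · m! / 2^(m-l)) · Σ_{k=l}^{m} 2^k · C(2m-2k, m-k) · C(m+k, m) · C(k, l) is a positive integer. -/
open Finset

/-- The rational expression `A_{l,m} = (l! m! / 2^(m-l)) Σ_{k=l}^m 2^k C(2m-2k,m-k) C(m+k,m) C(k,l)`. -/
def Aq (l m : ℕ) : ℚ :=
  ((l.factorial * m.factorial : ℕ) : ℚ) / 2 ^ (m - l) *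
    ∑ k ∈ Finset.Icc l m,
      (2 : ℚ) ^ k * ((2 * m - 2 * k).choose (m - k)) * ((m + k).choose m) * (k.choose l)

/-!
Proof idea: `(n+1) * C(2n+2, n+1) = 2(2n+1) * C(2n, n)` gives `n! * C(2n, n) = 2^n * (2n-1)!!`,
so `2^(m-k)` divides `(m-k)! * C(2m-2k, m-k)` and hence `2^m` divides `m! * 2^k * C(2m-2k, m-k)`.
Thus `2^m` divides `m!` times the sum, and the sum is positive thanks to its `k = m` term.
-/

open Nat

theorem Nat.two_pow_dvd_factorial_mul_centralBinom : ∀ n : ℕ, 2 ^ n ∣ n ! * centralBinom n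
  | 0 => by simp
  | n + 1 => by
    have hrec : (n + 1)! * centralBinom (n + 1) = 2 * (2 * n + 1) * (n ! * centralBinom n) := by
      rw [factorial_succ, mul_comm (n + 1), mul_assoc, succ_mul_centralBinom_succ]
      ring
    rw [hrec, pow_succ']
    exact mul_dvd_mul (dvd_mul_right 2 _) (two_pow_dvd_factorial_mul_centralBinom n)

theorem Nat.two_pow_dvd_factorial_mul_two_pow_mul_centralBinom {k m : ℕ} (hkm : k ≤ m) :
    2 ^ m ∣ m ! * (2 ^ k * centralBinom (m - k)) :=
  calc 2 ^ m = 2 ^ (m - k) * 2 ^ k := by rw [← pow_add, Nat.sub_add_cancel hkm]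
    _ ∣ (m - k)! * centralBinom (m - k) * 2 ^ k :=
      mul_dvd_mul_right (two_pow_dvd_factorial_mul_centralBinom _) _
    _ ∣ m ! * (2 ^ k * centralBinom (m - k)) := by
      rw [mul_comm (2 ^ k), ← mul_assoc]
      exact mul_dvd_mul_right (mul_dvd_mul_right (factorial_dvd_factorial (sub_le m k)) _) _

def sumA (l m : ℕ) : ℕ :=
  ∑ k ∈ Icc l m, 2 ^ k * centralBinom (m - k) * (m + k).choose m * k.choose l

theorem two_pow_dvd_factorial_mul_sumA (l m : ℕ) : 2 ^ m ∣ m ! * sumA l m := by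
  rw [sumA, mul_sum]
  refine dvd_sum fun k hk => ?_
  have hkm : k ≤ m := (mem_Icc.mp hk).2
  exact (two_pow_dvd_factorial_mul_two_pow_mul_centralBinom hkm).trans
    ⟨(m + k).choose m * k.choose l, by ring⟩

theorem sumA_pos {l m : ℕ} (hl : l ≤ m) : 0 < sumA l m :=
  sum_pos' (fun _ _ => Nat.zero_le _) ⟨m, mem_Icc.mpr ⟨hl, le_rfl⟩, by
    simp only [Nat.sub_self, centralBinom_zero]
    have := choose_pos (le_add_right m m)
    have := choose_pos hl
    positivity⟩

theorem Aq_eq_div (l m : ℕ) : Aq l m = ((l ! * m ! * sumA l m : ℕ) : ℚ) / 2 ^ (m - l) := by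
  have hsum : (sumA l m : ℚ) = ∑ k ∈ Icc l m,
      (2 : ℚ) ^ k * ((2 * m - 2 * k).choose (m - k)) * ((m + k).choose m) * (k.choose l) := by
    rw [sumA]
    push_cast
    refine sum_congr rfl fun k _ => ?_
    rw [← Nat.mul_sub, ← centralBinom_eq_two_mul_choose]
  rw [Aq, ← hsum]
  push_cast
  ring

theorem A_is_positive_integer_general (m l : ℕ) (hl : l ≤ m) :
    ∃ n : ℕ, 0 < n ∧ (n : ℚ) = Aq l m := by
  have hdvd : 2 ^ (m - l) ∣ l ! * m ! * sumA l m := by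
    rw [mul_assoc]
    exact dvd_mul_of_dvd_right
      ((pow_dvd_pow 2 (sub_le m l)).trans (two_pow_dvd_factorial_mul_sumA l m)) _
  have hpos : 0 < l ! * m ! * sumA l m := by
    have := sumA_pos hl
    positivity
  refine ⟨_ / 2 ^ (m - l), Nat.div_pos (Nat.le_of_dvd hpos hdvd) (by positivity), ?_⟩
  rw [Nat.cast_div hdvd (by positivity), Aq_eq_div]
  push_cast
  rfl

theorem A_is_positive_integer (m l : ℕ) (hm : 1 ≤ m) (hl : l ≤ m) :
    ∃ n : ℕ, 0 < n ∧ (n : ℚ) = Aq l m :=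
  A_is_positive_integer_general m l hl
end

section
/- For all m ≥ 1, the 2-adic valuation of A_{1,m} equals ν₂(m(m+1)) + 1, where A_{1,m} = (1! · m! / 2^(m-1)) · Σ_{k=1}^{m} 2^k · C(2m-2k, m-k) · C(m+k, m) · k. -/
open Finset

/-!
Multiplied by `2 ^ (m - 1)`, the `k`-th summand of `Aq 1 m` is the natural number
`m! C(2(m-k), m-k) C(m+k, m) 2^k k`. Since `(2n)! / n!` is `2^n` times an odd number, its
2-adic valuation is `m + k + ν₂(k) + ν₂(C(m+k, 2k))`, which is `m + ν₂(m(m+1))` for `k = 1`.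
For `k ≥ 2` it is strictly larger: `C(m+k, 2k) (2k)!` is the product of the `2k` consecutive
integers `m-k+1, …, m+k`, that is `m(m+1)` times two runs of `k-1` consecutive integers, and
the product of the two runs is divisible by `2 (k-1)!` (by `(k-1)!²` if `k ≥ 3`, by parity if
`k = 2`). So the summand `k = 1` alone determines the valuation of the sum.
-/

open Nat

theorem padicValNat_add_of_pow_succ_dvd {p a b : ℕ} [Fact p.Prime] (ha : a ≠ 0)
    (hb : p ^ (padicValNat p a + 1) ∣ b) : padicValNat p (a + b) = padicValNat p a := by
  have hab : a + b ≠ 0 := by omega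
  apply le_antisymm
  · by_contra! h
    have hdvd := (padicValNat_dvd_iff_le hab).mpr h
    exact pow_succ_padicValNat_not_dvd ha ((Nat.dvd_add_left hb).mp hdvd)
  · exact (padicValNat_dvd_iff_le hab).mp
      (dvd_add pow_padicValNat_dvd ((pow_dvd_pow p (le_succ _)).trans hb))

theorem padicValNat_le_of_dvd {p a b : ℕ} [Fact p.Prime] (hb : b ≠ 0) (h : a ∣ b) :
    padicValNat p a ≤ padicValNat p b :=
  (padicValNat_dvd_iff_le hb).mp (pow_padicValNat_dvd.trans h)

theorem padicValNat_add_choose_add_factorial_add_factorial (p a b : ℕ) [Fact p.Prime] :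
    padicValNat p ((a + b).choose b) + padicValNat p a ! + padicValNat p b ! =
      padicValNat p (a + b)! := by
  have hchoose := (choose_pos (le_add_left b a)).ne'
  rw [← add_choose_mul_factorial_mul_factorial,
    padicValNat.mul (by positivity) (factorial_ne_zero b),
    padicValNat.mul hchoose (factorial_ne_zero a)]

theorem padicValNat_two_factorial_two_mul_succ (n : ℕ) :
    padicValNat 2 (2 * (n + 1))! = padicValNat 2 n ! + padicValNat 2 (n + 1) + (n + 1) := by
  rw [padicValNat_factorial_mul, factorial_succ, padicValNat.mul (succ_ne_zero n)
    (factorial_ne_zero n), add_comm (padicValNat 2 n !)]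

theorem padicValNat_factorial_mul_choose_mul_choose (j k : ℕ) :
    padicValNat 2 ((j + k)! * (2 * j).choose j * (j + 2 * k).choose (j + k)) =
      j + k + padicValNat 2 ((j + 2 * k).choose (2 * k)) := by
  have hmid := padicValNat_add_choose_add_factorial_add_factorial 2 k (j + k)
  have houter := padicValNat_add_choose_add_factorial_add_factorial 2 j (2 * k)
  have hcentral := padicValNat_add_choose_add_factorial_add_factorial 2 j j
  have hj := padicValNat_factorial_mul (p := 2) j
  have hk := padicValNat_factorial_mul (p := 2) k
  rw [show k + (j + k) = j + 2 * k by ring] at hmid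
  rw [← two_mul] at hcentral
  rw [padicValNat.mul (mul_ne_zero (factorial_ne_zero _) (choose_pos (by omega)).ne')
    (choose_pos (by omega)).ne', padicValNat.mul (factorial_ne_zero _) (choose_pos (by omega)).ne']
  omega

theorem factorial_add_two_mul_add_two (j n : ℕ) :
    (j + 2 * n + 2)! = j ! * ((j + 1).ascFactorial n * (j + n + 3).ascFactorial n) *
      ((j + n + 1) * (j + n + 2)) := by
  have hlow := factorial_mul_ascFactorial j n
  have hhigh := factorial_mul_ascFactorial (j + n + 2) n
  rw [show j + 2 * n + 2 = j + n + 2 + n by ring, ← hhigh, factorial_succ, factorial_succ,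
    ← hlow]
  ring

theorem two_mul_factorial_dvd_ascFactorial_mul_ascFactorial (j : ℕ) {n : ℕ} (hn : 1 ≤ n) :
    2 * n ! ∣ (j + 1).ascFactorial n * (j + n + 3).ascFactorial n := by
  obtain rfl | hn := hn.eq_or_lt
  · simp only [ascFactorial_succ, ascFactorial_zero, factorial_one, mul_one, add_zero]
    rw [← even_iff_two_dvd, Nat.even_mul]
    rcases Nat.even_or_odd j with h | h
    · exact Or.inr (by rw [show j + 1 + 3 = j + 4 by ring]; exact h.add (by decide))
    · exact Or.inl h.add_one
  · calc 2 * n ! ∣ n ! * n ! := mul_dvd_mul_right (dvd_factorial two_pos hn) _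
      _ ∣ _ := mul_dvd_mul (factorial_dvd_ascFactorial _ _) (factorial_dvd_ascFactorial _ _)

theorem padicValNat_mul_succ_lt {m k : ℕ} (hk : 2 ≤ k) (hkm : k ≤ m) :
    padicValNat 2 (m * (m + 1)) <
      k + padicValNat 2 k + padicValNat 2 ((m + k).choose (2 * k)) := by
  obtain ⟨n, rfl⟩ : ∃ n, k = n + 1 := ⟨k - 1, by omega⟩
  obtain ⟨j, rfl⟩ : ∃ j, m = j + n + 1 := ⟨m - n - 1, by omega⟩
  have hfac := factorial_add_two_mul_add_two j n
  have hblocks := two_mul_factorial_dvd_ascFactorial_mul_ascFactorial j (n := n) (by omega)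
  have hchoose := padicValNat_add_choose_add_factorial_add_factorial 2 j (2 * (n + 1))
  have hdouble := padicValNat_two_factorial_two_mul_succ n
  have hpos : (j + 1).ascFactorial n * (j + n + 3).ascFactorial n ≠ 0 := by positivity
  have hblocks_val := padicValNat_le_of_dvd (p := 2) hpos hblocks
  rw [padicValNat.mul two_ne_zero (factorial_ne_zero n), padicValNat_self] at hblocks_val
  rw [show j + 2 * (n + 1) = j + 2 * n + 2 by ring, hfac, padicValNat.mul (by positivity)
    (by positivity), padicValNat.mul (factorial_ne_zero j) hpos] at hchoose
  rw [show j + n + 1 + 1 = j + n + 2 by ring, show j + n + 1 + (n + 1) = j + 2 * n + 2 by ring]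
  omega

namespace Aq

def oneSummand (m k : ℕ) : ℕ :=
  m ! * (2 * m - 2 * k).choose (m - k) * (m + k).choose m * (2 ^ k * k)

theorem one_eq_sum_oneSummand_div (m : ℕ) :
    Aq 1 m = (∑ k ∈ Icc 1 m, oneSummand m k : ℕ) / 2 ^ (m - 1) := by
  rw [Aq, factorial_one, one_mul, div_mul_eq_mul_div, mul_sum]
  push_cast [oneSummand, choose_one_right]
  congr 1
  exact sum_congr rfl fun k _ => by ring

theorem padicValNat_oneSummand {m k : ℕ} (hk : 1 ≤ k) (hkm : k ≤ m) :
    padicValNat 2 (oneSummand m k) =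
      m + k + padicValNat 2 k + padicValNat 2 ((m + k).choose (2 * k)) := by
  obtain ⟨j, rfl⟩ : ∃ j, m = j + k := ⟨m - k, by omega⟩
  have hbinom := padicValNat_factorial_mul_choose_mul_choose j k
  have hcentral := (choose_pos (show j ≤ 2 * j by omega)).ne'
  have hmid := (choose_pos (show j + k ≤ j + 2 * k by omega)).ne'
  rw [oneSummand, show 2 * (j + k) - 2 * k = 2 * j by omega, Nat.add_sub_cancel,
    show j + k + k = j + 2 * k by ring, padicValNat.mul (by positivity) (by positivity), hbinom,
    padicValNat.mul (by positivity) (by omega), padicValNat.prime_pow]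
  ring

theorem padicValNat_oneSummand_one {m : ℕ} (hm : 1 ≤ m) :
    padicValNat 2 (oneSummand m 1) = m + padicValNat 2 (m * (m + 1)) := by
  have hpair : m * (m + 1) = (m + 1).choose 2 * 2 := by
    rw [mul_comm, ← add_one_mul_choose_eq, choose_one_right]
  rw [padicValNat_oneSummand le_rfl hm, hpair, padicValNat.mul (choose_pos (by omega)).ne'
    two_ne_zero, padicValNat_self, padicValNat_one_right]
  ring

theorem oneSummand_ne_zero {m k : ℕ} (hk : 1 ≤ k) (hkm : k ≤ m) : oneSummand m k ≠ 0 := by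
  have hcentral := (choose_pos (show m - k ≤ 2 * m - 2 * k by omega)).ne'
  have hmid := (choose_pos (show m ≤ m + k by omega)).ne'
  unfold oneSummand
  positivity

end Aq

open Aq in
theorem nu_A_one (m : ℕ) (hm : 1 ≤ m) :
    padicValRat 2 (Aq 1 m) = (padicValNat 2 (m * (m + 1)) : ℤ) + 1 := by
  have hfirst := padicValNat_oneSummand_one hm
  have hrest : 2 ^ (padicValNat 2 (oneSummand m 1) + 1) ∣ ∑ k ∈ Ioc 1 m, oneSummand m k := by
    refine dvd_sum fun k hk => ?_
    obtain ⟨hk, hkm⟩ := mem_Ioc.mp hk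
    refine (pow_dvd_pow 2 ?_).trans pow_padicValNat_dvd
    rw [hfirst, padicValNat_oneSummand hk.le hkm]
    have hlarger := padicValNat_mul_succ_lt hk hkm
    omega
  have hsum :
      padicValNat 2 (∑ k ∈ Icc 1 m, oneSummand m k) = m + padicValNat 2 (m * (m + 1)) := by
    rw [← add_sum_Ioc_eq_sum_Icc hm, padicValNat_add_of_pow_succ_dvd
      (oneSummand_ne_zero le_rfl hm) hrest, hfirst]
  have hpos : (∑ k ∈ Icc 1 m, oneSummand m k : ℕ) ≠ 0 :=
    (sum_pos (fun k hk => (oneSummand_ne_zero (mem_Icc.mp hk).1 (mem_Icc.mp hk).2).bot_lt)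
      (nonempty_Icc.mpr hm)).ne'
  have htwo : padicValRat 2 2 = 1 := by exact_mod_cast padicValRat.self one_lt_two
  rw [one_eq_sum_oneSummand_div, padicValRat.div (by exact_mod_cast hpos) (by positivity),
    padicValRat.of_nat, hsum, padicValRat.pow, htwo]
  push_cast [hm]
  ring
end

section
/- For integers m ≥ l ≥ 0, ν₂(A_{l,m}) = ν₂((m+1-l)·(m+2-l)···(m+l)) + l; equivalently ν₂(A_{l,m}) = l + Σ_{j=-l+1}^{l} ν₂(m+j). -/
/-!
Write `F n` for the `2`-adic valuation of `n!`. Expanding the binomial coefficients into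
factorials and using `ν₂ (C(2n, n)) = n - F n`, the `k`-th summand `t_k` of `A_{l,m}` has
`ν₂ (t_k) = m + F (m + k) - F (m - k) - F m - F l - F (k - l)`. Hence for `d = k - l > 0`,
`ν₂ (t_k) - ν₂ (t_l) = (F (m + k) - F (m + l)) + (F (m - l) - F (m - k)) - F d`, and both brackets
are at least `F d` by superadditivity of `F`; this is positive since `F d > 0` for `d ≥ 2`, while
for `d = 1` one of `m + k`, `m - l` is even. So `t_l` alone determines the valuation of the sum,
and `ν₂ (A_{l,m}) = l + F (m + l) - F (m - l) = l + ν₂ ((m + 1 - l)_{2l})`.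
-/

open Finset

open Nat

section padicValNat

variable {p : ℕ} [Fact p.Prime]

theorem padicValNat_choose_add_factorial (a b : ℕ) :
    padicValNat p ((a + b).choose a) + padicValNat p a ! + padicValNat p b !
      = padicValNat p (a + b)! := by
  have hc := (choose_pos (le_add_right a b)).ne'
  rw [← padicValNat.mul hc (factorial_ne_zero a),
    ← padicValNat.mul (mul_ne_zero hc (factorial_ne_zero a)) (factorial_ne_zero b),
    choose_symm_add, add_choose_mul_factorial_mul_factorial]

theorem padicValNat_factorial_add_le (a b : ℕ) :
    padicValNat p a ! + padicValNat p b ! ≤ padicValNat p (a + b)! := by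
  rw [← padicValNat_choose_add_factorial a b]
  omega

theorem padicValNat_factorial_succ (n : ℕ) :
    padicValNat p (n + 1)! = padicValNat p n ! + padicValNat p (n + 1) := by
  rw [factorial_succ, padicValNat.mul (succ_ne_zero n) (factorial_ne_zero n), add_comm]

theorem padicValNat_add_eq_left_of_dvd {a b : ℕ} (ha : a ≠ 0)
    (hb : p ^ (padicValNat p a + 1) ∣ b) : padicValNat p (a + b) = padicValNat p a := by
  have hab : a + b ≠ 0 := by omega
  refine le_antisymm ?_ ((padicValNat_dvd_iff_le hab).mp
    (dvd_add pow_padicValNat_dvd ((pow_dvd_pow p (le_succ _)).trans hb)))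
  by_contra! hlt
  have hdvd : p ^ (padicValNat p a + 1) ∣ a + b := (padicValNat_dvd_iff_le hab).mpr hlt
  exact pow_succ_padicValNat_not_dvd ha ((Nat.dvd_add_left hb).mp hdvd)

theorem padicValNat_sum_eq_of_dvd {ι : Type*} [DecidableEq ι] {s : Finset ι} {f : ι → ℕ}
    {i₀ : ι} (hi₀ : i₀ ∈ s) (hf₀ : f i₀ ≠ 0)
    (hdvd : ∀ i ∈ s, i ≠ i₀ → p ^ (padicValNat p (f i₀) + 1) ∣ f i) :
    padicValNat p (∑ i ∈ s, f i) = padicValNat p (f i₀) := by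
  rw [← add_sum_erase s f hi₀]
  exact padicValNat_add_eq_left_of_dvd hf₀
    (dvd_sum fun i hi => hdvd i (mem_of_mem_erase hi) (ne_of_mem_erase hi))

theorem padicValNat_prod {ι : Type*} {s : Finset ι} {f : ι → ℕ}
    (hf : ∀ i ∈ s, f i ≠ 0) :
    padicValNat p (∏ i ∈ s, f i) = ∑ i ∈ s, padicValNat p (f i) := by
  simp only [← factorization_def _ Fact.out, factorization_prod hf, Finsupp.coe_finsetSum,
    Finset.sum_apply]

end padicValNat

theorem padicValNat_two_choose_two_mul_add_factorial (n : ℕ) :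
    padicValNat 2 ((2 * n).choose n) + padicValNat 2 n ! = n := by
  have h := padicValNat_choose_add_factorial (p := 2) n n
  rw [← two_mul, padicValNat_factorial_mul] at h
  omega

theorem padicValNat_two_factorial_add_add_lt {x y d : ℕ} (hd : d ≠ 0)
    (hxyd : Even (x + y + d)) :
    padicValNat 2 x ! + padicValNat 2 y ! + padicValNat 2 d !
      < padicValNat 2 (x + d)! + padicValNat 2 (y + d)! := by
  have hx := padicValNat_factorial_add_le (p := 2) x d
  have hy := padicValNat_factorial_add_le (p := 2) y d
  obtain rfl | hd2 := eq_or_lt_of_le (one_le_iff_ne_zero.mpr hd)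
  · rw [padicValNat_factorial_succ x, padicValNat_factorial_succ y, factorial_one,
      padicValNat_one_right]
    have h2 : 2 ∣ x + 1 ∨ 2 ∣ y + 1 := by
      obtain ⟨r, hr⟩ := hxyd
      omega
    rcases h2 with h2 | h2
    · have := one_le_padicValNat_of_dvd (add_one_ne_zero x) h2
      omega
    · have := one_le_padicValNat_of_dvd (add_one_ne_zero y) h2
      omega
  · have := one_le_padicValNat_of_dvd (factorial_ne_zero d) (dvd_factorial two_pos hd2)
    omega

def Aterm (l m k : ℕ) : ℕ :=
  2 ^ k * (2 * m - 2 * k).choose (m - k) * (m + k).choose m * k.choose l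

section Aterm

variable {l m k : ℕ}

theorem Aterm_ne_zero (hlk : l ≤ k) (hkm : k ≤ m) : Aterm l m k ≠ 0 := by
  unfold Aterm
  have := choose_pos (show m - k ≤ 2 * m - 2 * k by omega)
  have := choose_pos (le_add_right m k)
  have := choose_pos hlk
  positivity

theorem padicValNat_Aterm_add (hlk : l ≤ k) (hkm : k ≤ m) :
    padicValNat 2 (Aterm l m k) + padicValNat 2 (m - k)! + padicValNat 2 m ! + padicValNat 2 l !
      + padicValNat 2 (k - l)! = m + padicValNat 2 (m + k)! := by
  have hc₁ := (choose_pos (show m - k ≤ 2 * m - 2 * k by omega)).ne'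
  have hc₂ := (choose_pos (le_add_right m k)).ne'
  have hc₃ := (choose_pos hlk).ne'
  have hv : padicValNat 2 (Aterm l m k) = k + padicValNat 2 ((2 * m - 2 * k).choose (m - k))
      + padicValNat 2 ((m + k).choose m) + padicValNat 2 (k.choose l) := by
    rw [Aterm, padicValNat.mul (by positivity) hc₃, padicValNat.mul (by positivity) hc₂,
      padicValNat.mul (by positivity) hc₁, padicValNat.prime_pow]
  have hcentral := padicValNat_two_choose_two_mul_add_factorial (m - k)
  have hmk := padicValNat_choose_add_factorial (p := 2) m k
  have hlk' := padicValNat_choose_add_factorial (p := 2) l (k - l)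
  rw [← Nat.mul_sub_left_distrib] at hv
  rw [Nat.add_sub_cancel' hlk] at hlk'
  omega

theorem padicValNat_Aterm_lt (hlk : l < k) (hkm : k ≤ m) :
    padicValNat 2 (Aterm l m l) < padicValNat 2 (Aterm l m k) := by
  have hl := padicValNat_Aterm_add le_rfl (hlk.le.trans hkm)
  have hk := padicValNat_Aterm_add hlk.le hkm
  have key := padicValNat_two_factorial_add_add_lt (x := m - k) (y := m + l) (d := k - l)
    (by omega) ⟨m, by omega⟩
  rw [show m - k + (k - l) = m - l by omega, show m + l + (k - l) = m + k by omega] at key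
  rw [Nat.sub_self, factorial_zero, padicValNat_one_right] at hl
  omega

theorem padicValNat_sum_Aterm (hl : l ≤ m) :
    padicValNat 2 (∑ k ∈ Icc l m, Aterm l m k) = padicValNat 2 (Aterm l m l) := by
  refine padicValNat_sum_eq_of_dvd (mem_Icc.mpr ⟨le_rfl, hl⟩) (Aterm_ne_zero le_rfl hl) ?_
  intro k hk hkl
  rw [mem_Icc] at hk
  exact (padicValNat_dvd_iff_le (Aterm_ne_zero hk.1 hk.2)).mpr
    (padicValNat_Aterm_lt (lt_of_le_of_ne hk.1 (Ne.symm hkl)) hk.2)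

end Aterm

theorem Aq_eq (l m : ℕ) :
    Aq l m = ((l ! * m ! * ∑ k ∈ Icc l m, Aterm l m k : ℕ) : ℚ) / 2 ^ (m - l) := by
  simp only [Aq, Aterm]
  push_cast
  ring

theorem padicValRat_Aq (l m : ℕ) (hl : l ≤ m) :
    padicValRat 2 (Aq l m) = l + padicValNat 2 (m + l)! - padicValNat 2 (m - l)! := by
  have hS : ∑ k ∈ Icc l m, Aterm l m k ≠ 0 :=
    (sum_pos' (fun _ _ => zero_le _) ⟨l, mem_Icc.mpr ⟨le_rfl, hl⟩,
      pos_of_ne_zero (Aterm_ne_zero le_rfl hl)⟩).ne'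
  have hN : l ! * m ! * ∑ k ∈ Icc l m, Aterm l m k ≠ 0 := by positivity
  rw [Aq_eq, padicValRat.div (by exact_mod_cast hN) (by positivity), padicValRat.of_nat,
    padicValRat.pow, show padicValRat 2 (2 : ℚ) = 1 from padicValRat.self one_lt_two,
    padicValNat.mul (by positivity) hS, padicValNat.mul (factorial_ne_zero l) (factorial_ne_zero m),
    padicValNat_sum_Aterm hl]
  have h := padicValNat_Aterm_add le_rfl hl
  rw [Nat.sub_self, factorial_zero, padicValNat_one_right] at h
  omega

theorem factorial_mul_prod_range_eq (l m : ℕ) (hl : l ≤ m) :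
    (m - l)! * ∏ j ∈ range (2 * l), (m + 1 - l + j) = (m + l)! := by
  rw [show m + 1 - l = m - l + 1 by omega, ← ascFactorial_eq_prod_range,
    factorial_mul_ascFactorial, show m - l + 2 * l = m + l by omega]

theorem nu_A_pochhammer (l m : ℕ) (hl : l ≤ m) :
    padicValRat 2 (Aq l m)
        = (padicValNat 2 (∏ j ∈ Finset.range (2 * l), (m + 1 - l + j)) : ℤ) + l ∧
      padicValRat 2 (Aq l m)
        = (l : ℤ) + ∑ j ∈ Finset.range (2 * l), (padicValNat 2 (m + 1 - l + j) : ℤ) := by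
  have hprod : ∀ j ∈ range (2 * l), m + 1 - l + j ≠ 0 := fun j _ => by omega
  have hfac : padicValNat 2 (m - l)! + padicValNat 2 (∏ j ∈ range (2 * l), (m + 1 - l + j))
      = padicValNat 2 (m + l)! := by
    rw [← padicValNat.mul (factorial_ne_zero _) (prod_ne_zero_iff.mpr hprod),
      factorial_mul_prod_range_eq l m hl]
  have hfirst : padicValRat 2 (Aq l m)
      = (padicValNat 2 (∏ j ∈ range (2 * l), (m + 1 - l + j)) : ℤ) + l := by
    rw [padicValRat_Aq l m hl]
    omega
  refine ⟨hfirst, ?_⟩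
  rw [hfirst, padicValNat_prod hprod]
  push_cast
  ring
end

section
/- For any fixed odd positive integer l, the sequence m ↦ ν₂(A_{l,m}) (for m ≥ l) is 2-simple: for every integer t ≥ 0, ν₂(A_{l,2t+1}) = ν₂(A_{l,2t+2}). -/
open Finset

/-- The 2-adic valuation of `A_{l,n}`, given by `ν₂(A_{l,n}) = l + Σ_{j=-l+1}^{l} ν₂(n+j)`. -/
noncomputable def nuA (l : ℕ) (n : ℤ) : ℕ :=
  l + ∑ j ∈ Finset.Icc (-(l : ℤ) + 1) (l : ℤ), padicValInt 2 (n + j)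

/-! Shifting the window `[n - l + 1, n + l]` by one drops the value at its left end and adds the
value just past its right end. For odd `l` and even `n + 1` both of these integers are odd, so
their 2-adic valuations vanish. -/

theorem Finset.sum_Icc_comp_add_one_add {M : Type*} [AddCommMonoid M] (f : ℤ → M) {a b : ℤ}
    (h : a ≤ b + 1) : ∑ j ∈ Icc a b, f (j + 1) + f a = ∑ j ∈ Icc a b, f j + f (b + 1) := by
  have hshift : ∑ j ∈ Icc a b, f (j + 1) = ∑ j ∈ Icc (a + 1) (b + 1), f j := by
    rw [← map_add_right_Icc a b 1, sum_map]
    rfl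
  rw [hshift, add_comm, ← sum_insert (by simp), insert_Icc_add_one_left_eq_Icc h,
    ← insert_Icc_right_eq_Icc_add_one h, sum_insert (by simp), add_comm]

theorem nuA_add_one_add (l : ℕ) (n : ℤ) :
    nuA l (n + 1) + padicValInt 2 (n - l + 1) = nuA l n + padicValInt 2 (n + l + 1) := by
  have h := sum_Icc_comp_add_one_add (fun j => padicValInt 2 (n + j))
    (a := -(l : ℤ) + 1) (b := l) (by omega)
  simp only [nuA, add_assoc]
  convert congrArg (l + ·) h using 3 <;> ring_nf

theorem padicValInt_two_eq_zero_of_odd {z : ℤ} (hz : Odd z) : padicValInt 2 z = 0 :=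
  padicValInt.eq_zero_of_not_dvd (by simpa [← even_iff_two_dvd] using hz)

theorem nuA_two_simple (l : ℕ) (hl : Odd l) (t : ℕ) :
    nuA l (2 * t + 1) = nuA l (2 * t + 2) := by
  have hstep := nuA_add_one_add l (2 * t + 1)
  obtain ⟨k, rfl⟩ := hl
  have hleft : Odd (2 * (t : ℤ) + 1 - ↑(2 * k + 1) + 1) := ⟨t - k, by push_cast; ring⟩
  have hright : Odd (2 * (t : ℤ) + 1 + ↑(2 * k + 1) + 1) := ⟨t + k + 1, by push_cast; ring⟩
  rw [padicValInt_two_eq_zero_of_odd hleft, padicValInt_two_eq_zero_of_odd hright] at hstep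
  rw [show (2 * t + 2 : ℤ) = 2 * t + 1 + 1 by ring]
  omega
end

section
/- Let l be odd with 2^k < l < 2^{k+1}. Then for every m ≥ 1 and every integer a with 0 ≤ a < 2^{k+1} − l, we have ν₂(A_{l, 2^{k+1}m + a}) = ν₂(A_{l, 2^{k+1}m − a − 1}). -/
/-!
Write `N = 2^{k+1} m`. The substitution `j ↦ 1 - j` maps the window `[-l+1, l]` to itself and
turns `N + a + j` into `N - a - 1 + (1 - j) = N - (a + j)`. Since `a + l < 2^{k+1}`, every
`t = a + j` satisfies `|t| < 2^{k+1}`, so `2^{k+1} ∤ t` unless `t = 0`; as `2^{k+1} ∣ N`,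
the ultrametric inequality gives `ν₂(N + t) = ν₂(t) = ν₂(N - t)`, and the two sums agree termwise.
-/

open Finset

theorem padicValInt_add_eq_sub_of_pow_dvd {p n : ℕ} {N t : ℤ} (hN : (p : ℤ) ^ n ∣ N)
    (ht : ¬(p : ℤ) ^ n ∣ t) : padicValInt p (N + t) = padicValInt p (N - t) := by
  have hp : p ≠ 1 := by
    rintro rfl
    simp at ht
  have hlt : emultiplicity (p : ℤ) t < emultiplicity (p : ℤ) N :=
    (emultiplicity_lt_iff_not_dvd.mpr ht).trans_le (le_emultiplicity_of_pow_dvd hN)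
  have hadd : N + t ≠ 0 := fun h ↦ ht (by simpa [eq_neg_of_add_eq_zero_right h] using hN)
  have hsub : N - t ≠ 0 := fun h ↦ ht (by rwa [← sub_eq_zero.mp h])
  rw [padicValInt.of_ne_one_ne_zero hp hadd, padicValInt.of_ne_one_ne_zero hp hsub]
  exact multiplicity_eq_of_emultiplicity_eq
    ((emultiplicity_add_of_gt hlt).trans (emultiplicity_sub_of_gt hlt).symm)

theorem padicValInt_add_eq_sub_of_abs_lt {p n : ℕ} {N t : ℤ} (hN : (p : ℤ) ^ n ∣ N)
    (ht : |t| < (p : ℤ) ^ n) : padicValInt p (N + t) = padicValInt p (N - t) := by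
  rcases eq_or_ne t 0 with rfl | ht₀
  · simp
  · exact padicValInt_add_eq_sub_of_pow_dvd hN fun h ↦ ht₀ (Int.eq_zero_of_abs_lt_dvd h ht)

theorem nuA_add_eq_sub_sub_one {l n a : ℕ} {N : ℤ} (hN : (2 : ℤ) ^ n ∣ N) (h : a + l < 2 ^ n) :
    nuA l (N + a) = nuA l (N - a - 1) := by
  have hmaps : ∀ j ∈ Icc (-(l : ℤ) + 1) l, 1 - j ∈ Icc (-(l : ℤ) + 1) l := by
    intro j hj
    simp only [mem_Icc] at hj ⊢
    omega
  unfold nuA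
  congr 1
  refine sum_nbij' (fun j ↦ 1 - j) (fun j ↦ 1 - j) hmaps hmaps (fun _ _ ↦ by ring)
    (fun _ _ ↦ by ring) ?_
  intro j hj
  rw [mem_Icc] at hj
  have hal : (a : ℤ) + l < 2 ^ n := by exact_mod_cast h
  have habs : |(a : ℤ) + j| < 2 ^ n := abs_lt.mpr ⟨by omega, by omega⟩
  convert padicValInt_add_eq_sub_of_abs_lt (p := 2) (by exact_mod_cast hN) (by exact_mod_cast habs)
    using 2 <;> ring

theorem nuA_reflection_general (l k : ℕ) (m : ℕ) (a : ℕ) (ha : a < 2 ^ (k + 1) - l) :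
    nuA l (2 ^ (k + 1) * m + a) = nuA l (2 ^ (k + 1) * m - a - 1) :=
  nuA_add_eq_sub_sub_one (dvd_mul_right _ _) (by omega)

theorem nuA_reflection (l k : ℕ) (hl : Odd l) (hlo : 2 ^ k < l) (hhi : l < 2 ^ (k + 1))
    (m : ℕ) (hm : 1 ≤ m) (a : ℕ) (ha : a < 2 ^ (k + 1) - l) :
    nuA l (2 ^ (k + 1) * m + a) = nuA l (2 ^ (k + 1) * m - a - 1) :=
  nuA_reflection_general l k m a ha
end

section
/- Let l be odd, k satisfy 2^k < l < 2^{k+1}, and let a be an integer with 1 ≤ a ≤ 2^{k+1} − l. Set j₁ = −l + 2(1 + 2^k − a) and C_{l,m} = A_{l, l + 2(m−1)}. Then for all m ≥ 1, ν₂(C_{l, 2^k(m−1)+a}) = ν₂(m) + l + k + 1 + ν₂((j₁+l−1)!) + ν₂((l−j₁)!). -/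
/-!
Write `ν = ν₂`. The `2l` consecutive integers `2M - 1, …, 2M + 2l - 2` entering `C_{l,M}` alternate
between odd ones and the `l` even ones `2(M + t)`, so `ν(C_{l,M}) = 2l + Σ_{t<l} ν(M + t)`.
For `M = 2^k(m-1) + a` the window `M, …, M + l - 1` contains exactly one multiple of `2^k`,
namely `2^k m`, preceded by `x = 2^k - a` and followed by `y = l - 1 - x` integers, with
`x, y < 2^k`. Below `2^k` the valuation does not see multiples of `2^k`, so the two flanks
contribute `ν(x!)` and `ν(y!)`, and the middle term contributes `k + ν(m)`. Legendre's
`ν((2n)!) = ν((2n+1)!) = ν(n!) + n` turns this into the stated formula.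
-/

open Finset

/-- For odd `l`, the 2-adic valuation of `C_{l,m} = A_{l, l + 2(m-1)}`. -/
noncomputable def nuC (l m : ℕ) : ℕ := nuA l ((l : ℤ) + 2 * ((m : ℤ) - 1))

theorem padicValInt_lt_of_natAbs_lt_pow {p k : ℕ} {r : ℤ} (hr : r ≠ 0) (h : r.natAbs < p ^ k) :
    padicValInt p r < k :=
  (padicValNat_le_nat_log _).trans_lt (Nat.log_lt_of_lt_pow (Int.natAbs_ne_zero.2 hr) h)

section Valuation

variable {p : ℕ} [Fact p.Prime]

theorem padicValInt_pow_mul_add {k : ℕ} {r : ℤ} (hr : r ≠ 0) (hrk : padicValInt p r < k)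
    (q : ℤ) : padicValInt p ((p : ℤ) ^ k * q + r) = padicValInt p r := by
  have hdvd : ∀ j ≤ k, (p : ℤ) ^ j ∣ (p : ℤ) ^ k * q :=
    fun j hj => (pow_dvd_pow _ hj).mul_right q
  have hne : (p : ℤ) ^ k * q + r ≠ 0 := by
    intro h
    have hpk : (p : ℤ) ^ k ∣ r := by
      rw [eq_neg_of_add_eq_zero_right h]
      exact (hdvd k le_rfl).neg_right
    have := ((padicValInt_dvd_iff k r).1 hpk).resolve_left hr
    omega
  apply le_antisymm
  · by_contra! h
    have hsucc := ((padicValInt_dvd_iff (padicValInt p r + 1) _).2 (Or.inr h))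
    have := ((padicValInt_dvd_iff _ r).1 ((dvd_add_right (hdvd _ hrk)).1 hsucc)).resolve_left hr
    omega
  · exact ((padicValInt_dvd_iff _ _).1
      (dvd_add (hdvd _ hrk.le) (padicValInt_dvd r))).resolve_left hne

theorem padicValInt_pow_mul_add_of_natAbs_lt {k : ℕ} {r : ℤ} (hr : r ≠ 0)
    (h : r.natAbs < p ^ k) (q : ℤ) :
    padicValInt p ((p : ℤ) ^ k * q + r) = padicValInt p r :=
  padicValInt_pow_mul_add hr (padicValInt_lt_of_natAbs_lt_pow hr h) q

theorem padicValNat_factorial_eq_sum (n : ℕ) :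
    padicValNat p n.factorial = ∑ j ∈ range n, padicValNat p (j + 1) := by
  induction n with
  | zero => simp
  | succ n ih =>
    rw [Nat.factorial_succ, padicValNat.mul n.succ_ne_zero n.factorial_ne_zero, ih,
      sum_range_succ, add_comm]

theorem sum_padicValInt_pow_mul_add {k n : ℕ} (hn : n < p ^ k) (q : ℤ) :
    ∑ j ∈ range n, padicValInt p ((p : ℤ) ^ k * q + (j + 1)) = padicValNat p n.factorial := by
  rw [padicValNat_factorial_eq_sum]
  refine sum_congr rfl fun j hj => ?_
  have := mem_range.1 hj
  rw [padicValInt_pow_mul_add_of_natAbs_lt (by omega) (by omega) q]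
  exact_mod_cast padicValInt.of_nat

theorem sum_padicValInt_pow_mul_sub {k n : ℕ} (hn : n < p ^ k) (q : ℤ) :
    ∑ j ∈ range n, padicValInt p ((p : ℤ) ^ k * q - (j + 1)) = padicValNat p n.factorial := by
  rw [padicValNat_factorial_eq_sum]
  refine sum_congr rfl fun j hj => ?_
  have := mem_range.1 hj
  rw [sub_eq_add_neg, padicValInt_pow_mul_add_of_natAbs_lt (by omega) (by omega) q, padicValInt,
    Int.natAbs_neg, ← padicValInt]
  exact_mod_cast padicValInt.of_nat

theorem sum_padicValInt_window {k x y : ℕ} (hx : x < p ^ k) (hy : y < p ^ k) {m : ℤ}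
    (hm : m ≠ 0) :
    ∑ i ∈ range (x + 1 + y), padicValInt p ((p : ℤ) ^ k * m - x + i) =
      padicValNat p x.factorial + (k + padicValInt p m) + padicValNat p y.factorial := by
  have hp : (p : ℤ) ≠ 0 := by exact_mod_cast (Fact.out : p.Prime).ne_zero
  -- the left flank is read backwards, from `p ^ k * m - 1` down to `p ^ k * m - x`
  rw [sum_range_add, sum_range_succ, ← sum_range_reflect, ← sum_padicValInt_pow_mul_sub hx m,
    ← sum_padicValInt_pow_mul_add hy m]
  congr 1
  · congr 1
    · refine sum_congr rfl fun j hj => ?_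
      have := mem_range.1 hj
      congr 1
      push_cast [Nat.sub_sub, Nat.cast_sub (by omega : 1 + j ≤ x)]
      ring
    · rw [sub_add_cancel, padicValInt.mul (pow_ne_zero k hp) hm, ← Nat.cast_pow,
        padicValInt.of_nat, padicValNat.prime_pow]
  · exact sum_congr rfl fun t _ => by push_cast; ring_nf

end Valuation

theorem Finset.sum_range_two_mul {M : Type*} [AddCommMonoid M] (f : ℕ → M) (n : ℕ) :
    ∑ i ∈ range (2 * n), f i = ∑ i ∈ range n, (f (2 * i) + f (2 * i + 1)) := by
  induction n with
  | zero => simp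
  | succ n ih => rw [mul_add, mul_one, sum_range_succ, sum_range_succ, sum_range_succ, ih,
      add_assoc]

theorem nuA_eq_sum_range (l : ℕ) (n : ℤ) :
    nuA l n = l + ∑ i ∈ range (2 * l), padicValInt 2 (n - l + 1 + i) := by
  rw [nuA, Int.Icc_eq_finset_map, sum_map, show ((l : ℤ) + 1 - (-l + 1)).toNat = 2 * l by omega]
  congr 1
  exact sum_congr rfl fun i _ => by simp only [Function.Embedding.trans_apply,
    Nat.castEmbedding_apply, addLeftEmbedding_apply]; ring_nf

theorem nuC_eq_two_mul_add_sum {l M : ℕ} (hM : 1 ≤ M) :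
    nuC l M = 2 * l + ∑ t ∈ range l, padicValInt 2 ((M : ℤ) + t) := by
  have hpair (t : ℕ) :
      padicValInt 2 ((l : ℤ) + 2 * (M - 1) - l + 1 + (2 * t : ℕ)) +
        padicValInt 2 ((l : ℤ) + 2 * (M - 1) - l + 1 + (2 * t + 1 : ℕ)) =
      1 + padicValInt 2 ((M : ℤ) + t) := by
    have hodd : padicValInt 2 ((l : ℤ) + 2 * (M - 1) - l + 1 + (2 * t : ℕ)) = 0 :=
      padicValInt.eq_zero_of_not_dvd (by push_cast; omega)
    have heven : (l : ℤ) + 2 * (M - 1) - l + 1 + (2 * t + 1 : ℕ) = (M + t) * (2 : ℕ) := by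
      push_cast; ring
    rw [hodd, heven, padicValInt_mul_eq_succ ((M : ℤ) + t) (by omega)]
    ring
  rw [nuC, nuA_eq_sum_range, sum_range_two_mul, sum_congr rfl fun t _ => hpair t,
    sum_add_distrib, sum_const, card_range, smul_eq_mul, mul_one]
  ring

theorem nuC_terminal_first_general (l k : ℕ) (hlo : 2 ^ k < l)
    (a : ℕ) (ha1 : 1 ≤ a) (ha2 : a ≤ 2 ^ (k + 1) - l) (m : ℕ) (hm : 1 ≤ m) :
    (nuC l (2 ^ k * (m - 1) + a) : ℤ) =
      (padicValNat 2 m : ℤ) + l + k + 1 +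
        (padicValNat 2 ((-(l : ℤ) + 2 * (1 + 2 ^ k - (a : ℤ)) + l - 1).toNat.factorial) : ℤ) +
        (padicValNat 2 (((l : ℤ) - (-(l : ℤ) + 2 * (1 + 2 ^ k - (a : ℤ)))).toNat.factorial) : ℤ) := by
  have hpow : 2 ^ (k + 1) = 2 * 2 ^ k := by ring
  obtain ⟨x, hx⟩ : ∃ x, x = 2 ^ k - a := ⟨_, rfl⟩
  obtain ⟨y, hy⟩ : ∃ y, y = l + a - 1 - 2 ^ k := ⟨_, rfl⟩
  have hlen : l = x + 1 + y := by omega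
  have hstart : ((2 ^ k * (m - 1) + a : ℕ) : ℤ) = ((2 : ℕ) : ℤ) ^ k * m - x := by
    rw [hx, Nat.cast_sub (by omega), Nat.cast_add, Nat.cast_mul, Nat.cast_sub hm]
    push_cast
    ring
  have hwindow : ∑ t ∈ range l, padicValInt 2 (((2 ^ k * (m - 1) + a : ℕ) : ℤ) + t) =
      padicValNat 2 x.factorial + (k + padicValNat 2 m) + padicValNat 2 y.factorial := by
    rw [hstart, hlen, sum_padicValInt_window (by omega) (by omega) (by omega), padicValInt.of_nat]
  have hcast : ((2 ^ k : ℕ) : ℤ) = 2 ^ k := by norm_num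
  have hleft : (-(l : ℤ) + 2 * (1 + 2 ^ k - (a : ℤ)) + l - 1).toNat = 2 * x + 1 := by omega
  have hright : ((l : ℤ) - (-(l : ℤ) + 2 * (1 + 2 ^ k - (a : ℤ)))).toNat = 2 * y := by omega
  rw [nuC_eq_two_mul_add_sum (by omega), hwindow, hleft, hright,
    padicValNat_factorial_mul_add x (by norm_num), padicValNat_factorial_mul,
    padicValNat_factorial_mul, hlen]
  push_cast
  ring

theorem nuC_terminal_first (l k : ℕ) (hl : Odd l) (hlo : 2 ^ k < l) (hhi : l < 2 ^ (k + 1))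
    (a : ℕ) (ha1 : 1 ≤ a) (ha2 : a ≤ 2 ^ (k + 1) - l) (m : ℕ) (hm : 1 ≤ m) :
    (nuC l (2 ^ k * (m - 1) + a) : ℤ) =
      (padicValNat 2 m : ℤ) + l + k + 1 +
        (padicValNat 2 ((-(l : ℤ) + 2 * (1 + 2 ^ k - (a : ℤ)) + l - 1).toNat.factorial) : ℤ) +
        (padicValNat 2 (((l : ℤ) - (-(l : ℤ) + 2 * (1 + 2 ^ k - (a : ℤ)))).toNat.factorial) : ℤ) :=
  nuC_terminal_first_general l k hlo a ha1 ha2 m hm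
end

section
/- If integers a ≥ 0, b, c satisfy Σ_{i=0}^{a} ν₂(m+i) = ν₂(m+b) + c for all integers m ≥ 1 (with m+b ≥ 1 whenever required), then a = 0, b = 0, and c = 0. -/
/-!
For `0 < |k| < p ^ N` the valuation of `p ^ N + k` is that of `k`, whereas `p ^ N + 0` has
valuation `N`. So moving `m = p ^ N + t` to `p ^ (N + 1) + t` raises the left-hand side by the
number of `i ≤ a` with `t + i = 0` and the right-hand side by `1` or `0` according as `t + b = 0`.
Taking `t = 0` and `t = -a` forces `b = 0` and `a = b`, and then `m = 1` gives `c = 0`.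
-/

open Finset

namespace padicValInt

variable {p : ℕ} [hp : Fact p.Prime]

lemma lt_of_abs_lt {k : ℤ} (hk : k ≠ 0) {N : ℕ} (h : |k| < (p : ℤ) ^ N) :
    padicValInt p k < N := by
  have hle : (p : ℤ) ^ padicValInt p k ≤ |k| :=
    Int.le_of_dvd (abs_pos.2 hk) ((dvd_abs _ _).2 (padicValInt_dvd k))
  exact (pow_lt_pow_iff_right₀ (by exact_mod_cast hp.out.one_lt)).1 (hle.trans_lt h)

lemma prime_pow (N : ℕ) : padicValInt p ((p : ℤ) ^ N) = N := by
  rw [show ((p : ℤ) ^ N) = ((p ^ N : ℕ) : ℤ) by push_cast; rfl, padicValInt.of_nat,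
    padicValNat.prime_pow]

lemma prime_pow_add {k : ℤ} (hk : k ≠ 0) {N : ℕ} (h : |k| < (p : ℤ) ^ N) :
    padicValInt p ((p : ℤ) ^ N + k) = padicValInt p k := by
  have hne : k + (p : ℤ) ^ N ≠ 0 := by linarith [neg_abs_le k]
  have hval : padicValRat p k < padicValRat p (((p : ℤ) ^ N : ℤ) : ℚ) := by
    rw [padicValRat.of_int, padicValRat.of_int, prime_pow]
    exact_mod_cast lt_of_abs_lt hk h
  have := padicValRat.add_eq_of_lt (by exact_mod_cast hne) (by exact_mod_cast hk)
    (by exact_mod_cast pow_ne_zero N (Nat.cast_ne_zero.2 hp.out.ne_zero)) hval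
  rw [← Int.cast_add, padicValRat.of_int, padicValRat.of_int, add_comm] at this
  exact_mod_cast this

lemma prime_pow_succ_add_sub_prime_pow_add (k : ℤ) {N : ℕ} (h : |k| < (p : ℤ) ^ N) :
    (padicValInt p ((p : ℤ) ^ (N + 1) + k) : ℤ) - padicValInt p ((p : ℤ) ^ N + k) =
      if k = 0 then 1 else 0 := by
  rcases eq_or_ne k 0 with rfl | hk
  · simp [prime_pow]
  · have h' : |k| < (p : ℤ) ^ (N + 1) :=
      h.trans_le (pow_le_pow_right₀ (by exact_mod_cast hp.out.one_le) N.le_succ)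
    simp [prime_pow_add hk h, prime_pow_add hk h', hk]

end padicValInt

theorem sum_ite_eq_ite_of_sum_padicValInt_eq {p : ℕ} [hp : Fact p.Prime] {a : ℕ} {b c : ℤ}
    (h : ∀ m : ℤ, 1 ≤ m → 1 ≤ m + b →
      (∑ i ∈ range (a + 1), (padicValInt p (m + i) : ℤ)) = padicValInt p (m + b) + c)
    (t : ℤ) :
    (∑ i ∈ range (a + 1), if t + i = 0 then (1 : ℤ) else 0) = if t + b = 0 then 1 else 0 := by
  have hp1 : (1 : ℤ) < p := by exact_mod_cast hp.out.one_lt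
  obtain ⟨N, hN⟩ := pow_unbounded_of_one_lt (|t| + |b| + a) hp1
  have hNN : (p : ℤ) ^ N ≤ (p : ℤ) ^ (N + 1) := pow_le_pow_right₀ hp1.le N.le_succ
  have small : ∀ s : ℤ, |s| ≤ |t| + |b| + a → |s| < (p : ℤ) ^ N := fun s hs => hs.trans_lt hN
  have hi : ∀ i ∈ range (a + 1), |t + i| < (p : ℤ) ^ N := fun i hmem => small _ <| by
    have : (i : ℤ) ≤ a := by exact_mod_cast Nat.lt_succ_iff.1 (mem_range.1 hmem)
    linarith [abs_add_le t i, abs_nonneg b, abs_of_nonneg (Nat.cast_nonneg (α := ℤ) i)]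
  have hb : |t + b| < (p : ℤ) ^ N := small _ <| by
    linarith [abs_add_le t b, Nat.cast_nonneg (α := ℤ) a]
  have at_pow : ∀ M : ℕ, (p : ℤ) ^ N ≤ (p : ℤ) ^ M →
      (∑ i ∈ range (a + 1), (padicValInt p ((p : ℤ) ^ M + (t + i)) : ℤ)) =
        padicValInt p ((p : ℤ) ^ M + (t + b)) + c := by
    intro M hM
    simp only [← add_assoc]
    exact h _ (by linarith [neg_abs_le t, abs_nonneg b, Nat.cast_nonneg (α := ℤ) a])
      (by linarith [neg_abs_le (t + b), abs_nonneg t, Nat.cast_nonneg (α := ℤ) a])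
  have hdiff := congrArg₂ (· - ·) (at_pow (N + 1) hNN) (at_pow N le_rfl)
  simp only [← sum_sub_distrib, add_sub_add_right_eq_sub] at hdiff
  rwa [padicValInt.prime_pow_succ_add_sub_prime_pow_add _ hb,
    sum_congr rfl fun i hmem => padicValInt.prime_pow_succ_add_sub_prime_pow_add _ (hi i hmem)]
    at hdiff

theorem rigidity (a : ℕ) (b c : ℤ)
    (h : ∀ m : ℤ, 1 ≤ m → 1 ≤ m + b →
      (∑ i ∈ Finset.range (a + 1), (padicValInt 2 (m + i) : ℤ)) = padicValInt 2 (m + b) + c) :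
    a = 0 ∧ b = 0 ∧ c = 0 := by
  have key := sum_ite_eq_ite_of_sum_padicValInt_eq h
  have hb : b = 0 := by simpa using key 0
  have ha : a = 0 := by simpa [hb, neg_add_eq_zero] using key (-a)
  subst ha hb
  simpa [eq_comm] using h 1 le_rfl le_rfl
end

section
/- For all m ≥ 1, ν₂(C_{3,m}) = 7 + ν₂((m+1)/2) if m ≡ 1 (mod 2); ν₂(C_{3,m}) = 9 + ν₂(m/4) if m ≡ 0 (mod 4); and ν₂(C_{3,m}) = 9 + ν₂((m+2)/4) if m ≡ 2 (mod 4). -/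
/-- `ν₂(C_{3,m}) = 3 + Σ_{j=-2}^{3} ν₂(2m+1+j)`, i.e. `C_{3,m} = A_{3,2m+1}`. -/
def nuC3 (m : ℕ) : ℕ :=
  3 + (padicValNat 2 (2 * m - 1) + padicValNat 2 (2 * m) + padicValNat 2 (2 * m + 1) +
    padicValNat 2 (2 * m + 2) + padicValNat 2 (2 * m + 3) + padicValNat 2 (2 * m + 4))

lemma nu_odd {n : ℕ} (hn : n % 2 = 1) : padicValNat 2 n = 0 :=
  padicValNat.eq_zero_of_not_dvd (by omega)

lemma nu_two_mul {n : ℕ} (hn : n ≠ 0) : padicValNat 2 (2 * n) = 1 + padicValNat 2 n := by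
  haveI : Fact (Nat.Prime 2) := ⟨Nat.prime_two⟩
  rw [padicValNat.mul (by norm_num) hn, padicValNat.self (by norm_num)]

theorem nuC3_formula (m : ℕ) (hm : 1 ≤ m) :
    (m % 2 = 1 → nuC3 m = 7 + padicValNat 2 ((m + 1) / 2)) ∧
    (m % 4 = 0 → nuC3 m = 9 + padicValNat 2 (m / 4)) ∧
    (m % 4 = 2 → nuC3 m = 9 + padicValNat 2 ((m + 2) / 4)) := by
  have ha : padicValNat 2 (2 * m - 1) = 0 := nu_odd (by omega)
  have hb : padicValNat 2 (2 * m + 1) = 0 := nu_odd (by omega)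
  have hc : padicValNat 2 (2 * m + 3) = 0 := nu_odd (by omega)
  refine ⟨fun h => ?_, fun h => ?_, fun h => ?_⟩
  · have h1 : padicValNat 2 (2 * m) = 1 := by
      rw [nu_two_mul (by omega), nu_odd h]
    have h2 : padicValNat 2 (2 * m + 2) = 2 + padicValNat 2 ((m + 1) / 2) := by
      rw [show 2 * m + 2 = 2 * (2 * ((m + 1) / 2)) by omega,
        nu_two_mul (by omega), nu_two_mul (by omega)]
      omega
    have h3 : padicValNat 2 (2 * m + 4) = 1 := by
      rw [show 2 * m + 4 = 2 * (m + 2) by ring, nu_two_mul (by omega), nu_odd (by omega)]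
    unfold nuC3; omega
  · have h1 : padicValNat 2 (2 * m) = 3 + padicValNat 2 (m / 4) := by
      rw [show 2 * m = 2 * (2 * (2 * (m / 4))) by omega,
        nu_two_mul (by omega), nu_two_mul (by omega), nu_two_mul (by omega)]
      omega
    have h2 : padicValNat 2 (2 * m + 2) = 1 := by
      rw [show 2 * m + 2 = 2 * (m + 1) by ring, nu_two_mul (by omega), nu_odd (by omega)]
    have h3 : padicValNat 2 (2 * m + 4) = 2 := by
      rw [show 2 * m + 4 = 2 * (2 * (m / 2 + 1)) by omega,
        nu_two_mul (by omega), nu_two_mul (by omega), nu_odd (by omega)]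
    unfold nuC3; omega
  · have h1 : padicValNat 2 (2 * m) = 2 := by
      rw [show 2 * m = 2 * (2 * (m / 2)) by omega,
        nu_two_mul (by omega), nu_two_mul (by omega), nu_odd (by omega)]
    have h2 : padicValNat 2 (2 * m + 2) = 1 := by
      rw [show 2 * m + 2 = 2 * (m + 1) by ring, nu_two_mul (by omega), nu_odd (by omega)]
    have h3 : padicValNat 2 (2 * m + 4) = 3 + padicValNat 2 ((m + 2) / 4) := by
      rw [show 2 * m + 4 = 2 * (2 * (2 * ((m + 2) / 4))) by omega,
        nu_two_mul (by omega), nu_two_mul (by omega), nu_two_mul (by omega)]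
      omega
    unfold nuC3; omega
end

section
/- Let l be odd with 2^k < l < 2^{k+1}, and let u < k. Then for every residue a with 1 ≤ a ≤ 2^u, the function m ↦ ν₂(C_{l, 2^u(m−1)+a}) − ν₂(m) is not constant on m ≥ 1. -/
open Finset

/-!
The sum defining `ν₂(C_{l,w+1})` is a sum of `ν₂(i)` over `2w < i ≤ 2w + 2l`, so it telescopes to
`2l + ν₂((w+l)!) - ν₂(w!)`. By Legendre's formula `ν₂(n!) = n - s₂(n)`, prefixing a binary digit
gives `ν₂((2^M + x)!) = ν₂(x!) + 2^M - 1` for `x < 2^M`. For the odd values `m = 2^l - 1` and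
`m = 2^(l+1) - 1` the index of `C` is `2^M - g + 1` and `2^(M+1) - g + 1`, with `M = u + l` and
`g = 2^(u+1) + 1 - a`; as long as `g ≤ l` (which is where `u < k` enters), the two values of
`ν₂(C)` then differ by exactly one.
-/

open scoped Nat

theorem digits_sum_base_pow_add {b M x : ℕ} (hb : 1 < b) (hx : x < b ^ M) :
    (b.digits (b ^ M + x)).sum = (b.digits x).sum + 1 := by
  have hlen : (b.digits x).length ≤ M := (Nat.digits_length_le_iff hb x).2 hx
  have h := Nat.digits_append_zeroes_append_digits (k := M - (b.digits x).length) (n := x) hb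
    Nat.one_pos
  rw [Nat.add_sub_cancel' hlen, mul_one, add_comm x] at h
  rw [← h]
  simp [Nat.digits_of_lt b 1 one_ne_zero hb]

theorem sub_one_mul_padicValNat_factorial_pow_add {p : ℕ} [Fact p.Prime] {M x : ℕ}
    (hx : x < p ^ M) :
    (p - 1) * padicValNat p (p ^ M + x)! + 1 = (p - 1) * padicValNat p x ! + p ^ M := by
  rw [sub_one_mul_padicValNat_factorial, sub_one_mul_padicValNat_factorial,
    digits_sum_base_pow_add (Fact.out : p.Prime).one_lt hx]
  have hs := Nat.digit_sum_le p x
  omega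

theorem sum_Ioc_padicValNat_add_factorial {p : ℕ} [Fact p.Prime] {m n : ℕ} (hmn : m ≤ n) :
    ∑ i ∈ Ioc m n, padicValNat p i + padicValNat p m ! = padicValNat p n ! := by
  induction n, hmn using Nat.le_induction with
  | base => simp
  | succ n hmn ih =>
    rw [Finset.sum_Ioc_succ_top hmn, Nat.factorial_succ,
      padicValNat.mul (Nat.succ_ne_zero n) (Nat.factorial_ne_zero n), ← ih]
    ring

theorem nuC_succ_eq_sum_Ioc (l w : ℕ) :
    nuC l (w + 1) = l + ∑ i ∈ Ioc (2 * w) (2 * w + 2 * l), padicValNat 2 i := by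
  unfold nuC nuA
  congr 1
  refine Finset.sum_nbij' (fun j => ((l : ℤ) + 2 * w + j).toNat)
    (fun i => (i : ℤ) - l - 2 * w) ?_ ?_ ?_ ?_ ?_
  · intro j hj
    simp only [mem_Icc, mem_Ioc] at hj ⊢
    omega
  · intro i hi
    simp only [mem_Icc, mem_Ioc] at hi ⊢
    omega
  · intro j hj
    simp only [mem_Icc] at hj
    omega
  · intro i hi
    omega
  · intro j hj
    simp only [mem_Icc] at hj
    rw [padicValInt]
    congr 1
    omega

theorem nuC_succ_add_padicValNat_factorial (l w : ℕ) :
    nuC l (w + 1) + padicValNat 2 w ! = 2 * l + padicValNat 2 (w + l)! := by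
  have hsum := sum_Ioc_padicValNat_add_factorial (p := 2) (Nat.le_add_right (2 * w) (2 * l))
  rw [← mul_add, padicValNat_factorial_mul, padicValNat_factorial_mul] at hsum
  rw [nuC_succ_eq_sum_Ioc, ← mul_add]
  omega

theorem nuC_two_pow_succ_sub_add_one {l M g : ℕ} (hg : 1 ≤ g) (hgl : g ≤ l) (hlM : l ≤ 2 ^ M) :
    nuC l (2 ^ (M + 1) - g + 1) = nuC l (2 ^ M - g + 1) + 1 := by
  have hpow : 2 ^ (M + 1) = 2 ^ M + 2 ^ M := by ring
  have hw := nuC_succ_add_padicValNat_factorial l (2 ^ M - g)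
  have hw' := nuC_succ_add_padicValNat_factorial l (2 ^ (M + 1) - g)
  have h₁ := sub_one_mul_padicValNat_factorial_pow_add (p := 2) (M := M) (x := 2 ^ M - g)
    (by omega)
  have h₂ := sub_one_mul_padicValNat_factorial_pow_add (p := 2) (M := M) (x := l - g) (by omega)
  have h₃ := sub_one_mul_padicValNat_factorial_pow_add (p := 2) (M := M + 1) (x := l - g)
    (by omega)
  rw [show 2 ^ M + (2 ^ M - g) = 2 ^ (M + 1) - g by omega] at h₁
  rw [show 2 ^ M + (l - g) = 2 ^ M - g + l by omega] at h₂
  rw [show 2 ^ (M + 1) + (l - g) = 2 ^ (M + 1) - g + l by omega] at h₃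
  simp only [Nat.add_one_sub_one, one_mul] at h₁ h₂ h₃
  omega

theorem two_pow_mul_two_pow_sub_two_add {u T a : ℕ} (hT : 1 ≤ T) (ha1 : 1 ≤ a)
    (ha2 : a ≤ 2 ^ (u + 1)) :
    2 ^ u * (2 ^ T - 1 - 1) + a = 2 ^ (u + T) - (2 ^ (u + 1) + 1 - a) + 1 := by
  have h2T : 2 ≤ 2 ^ T := Nat.le_self_pow (by omega) 2
  have h := Nat.mul_le_mul_left (2 ^ u) h2T
  rw [pow_add, pow_succ, Nat.sub_sub, Nat.mul_sub]
  omega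

theorem padicValNat_two_pow_sub_one (T : ℕ) : padicValNat 2 (2 ^ T - 1) = 0 := by
  rcases T with _ | T
  · simp
  apply padicValNat.eq_zero_of_not_dvd
  have hT := Nat.one_le_two_pow (n := T)
  rw [pow_succ]
  omega

theorem no_terminal_before_k_general (l k u : ℕ) (hlo : 2 ^ k < l)
    (hu : u < k) (a : ℕ) (ha1 : 1 ≤ a) (ha2 : a ≤ 2 ^ u) :
    ¬ ∃ c : ℤ, ∀ m : ℕ, 1 ≤ m →
      (nuC l (2 ^ u * (m - 1) + a) : ℤ) - padicValNat 2 m = c := by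
  rintro ⟨c, hc⟩
  have hu1 : 2 ^ (u + 1) < l := (Nat.pow_le_pow_right two_pos hu).trans_lt hlo
  have hau : a ≤ 2 ^ (u + 1) := ha2.trans (Nat.pow_le_pow_right two_pos u.le_succ)
  have hl : l ≤ 2 ^ (u + l) :=
    Nat.lt_two_pow_self.le.trans (Nat.pow_le_pow_right two_pos (by omega))
  have hl2 : 2 ≤ 2 ^ l := Nat.le_self_pow (by omega) 2
  have hc₁ := hc (2 ^ l - 1) (by omega)
  have hc₂ := hc (2 ^ (l + 1) - 1) (by rw [pow_succ]; omega)
  rw [padicValNat_two_pow_sub_one, two_pow_mul_two_pow_sub_two_add (by omega) ha1 hau]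
    at hc₁ hc₂
  have hstep := nuC_two_pow_succ_sub_add_one (M := u + l) (g := 2 ^ (u + 1) + 1 - a) (by omega)
    (by omega) hl
  rw [← add_assoc] at hc₂
  omega

theorem no_terminal_before_k (l k u : ℕ) (hl : Odd l) (hlo : 2 ^ k < l) (hhi : l < 2 ^ (k + 1))
    (hu : u < k) (a : ℕ) (ha1 : 1 ≤ a) (ha2 : a ≤ 2 ^ u) :
    ¬ ∃ c : ℤ, ∀ m : ℕ, 1 ≤ m →
      (nuC l (2 ^ u * (m - 1) + a) : ℤ) - padicValNat 2 m = c :=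
  no_terminal_before_k_general l k u hlo hu a ha1 ha2
end
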